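/- The function K = (ω₁² − ω₂² + α₁ − β₂)² + (2ω₁ω₂ + α₂ + β₁)² is a first integral of the Kowalevski two-field equations: at every point of ℝ⁹, the directional derivative of K along the vector field of the equations vanishes. -/

import Mathlib

/-! Kowalevski's change of variables: with `ξ = ω₁² − ω₂² + α₁ − β₂` and `η = 2ω₁ω₂ + α₂ + β₁`,
the equations give `ξ̇ = ω₃ η` and `η̇ = −ω₃ ξ`, i.e. `ξ + iη` is only rotated by the flow,
so its squared modulus `K = ξ² + η²` is conserved. -/

noncomputable section

/-- Cross product on ℝ³ (represented as `ℝ × ℝ × ℝ`). -/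
def cross3 (u v : ℝ × ℝ × ℝ) : ℝ × ℝ × ℝ :=
  (u.2.1 * v.2.2 - u.2.2 * v.2.1,
   u.2.2 * v.1 - u.1 * v.2.2,
   u.1 * v.2.1 - u.2.1 * v.1)

/-- The vector field of the Kowalevski two-field equations on ℝ⁹ = ℝ³ × ℝ³ × ℝ³,
with coordinates `(ω, α, β)`:
`2ω̇₁ = ω₂ω₃ + β₃`, `2ω̇₂ = −ω₁ω₃ − α₃`, `ω̇₃ = α₂ − β₁`, `α̇ = α × ω`, `β̇ = β × ω`. -/
def kowField (v : (ℝ × ℝ × ℝ) × (ℝ × ℝ × ℝ) × (ℝ × ℝ × ℝ)) :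
    (ℝ × ℝ × ℝ) × (ℝ × ℝ × ℝ) × (ℝ × ℝ × ℝ) :=
  (((v.1.2.1 * v.1.2.2 + v.2.2.2.2) / 2,
    (-(v.1.1 * v.1.2.2) - v.2.1.2.2) / 2,
    v.2.1.2.1 - v.2.2.1),
   cross3 v.2.1 v.1,
   cross3 v.2.2 v.1)

/-- The Kowalevski-type integral `K = (ω₁² − ω₂² + α₁ − β₂)² + (2ω₁ω₂ + α₂ + β₁)²`. -/
def Kfun (v : (ℝ × ℝ × ℝ) × (ℝ × ℝ × ℝ) × (ℝ × ℝ × ℝ)) : ℝ :=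
  (v.1.1 ^ 2 - v.1.2.1 ^ 2 + v.2.1.1 - v.2.2.2.1) ^ 2
    + (2 * v.1.1 * v.1.2.1 + v.2.1.2.1 + v.2.2.1) ^ 2

theorem fderiv_sq_add_sq_apply_eq_zero {E : Type*} [NormedAddCommGroup E] [NormedSpace ℝ E]
    {f g : E → ℝ} {x w : E} (c : ℝ) (hf : DifferentiableAt ℝ f x) (hg : DifferentiableAt ℝ g x)
    (hfw : fderiv ℝ f x w = c * g x) (hgw : fderiv ℝ g x w = -(c * f x)) :
    fderiv ℝ (fun y => f y ^ 2 + g y ^ 2) x w = 0 := by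
  have h : HasFDerivAt (fun y => f y ^ 2 + g y ^ 2) _ x :=
    (hf.hasFDerivAt.pow 2).add (hg.hasFDerivAt.pow 2)
  rw [h.fderiv]
  simp only [Nat.add_one_sub_one, pow_one, nsmul_eq_mul, Nat.cast_ofNat, add_apply, smul_apply, hfw,
    smul_eq_mul, hgw]
  ring

local notation "ℝ⁹" => (ℝ × ℝ × ℝ) × (ℝ × ℝ × ℝ) × (ℝ × ℝ × ℝ)

def kowXi (v : ℝ⁹) : ℝ := v.1.1 ^ 2 - v.1.2.1 ^ 2 + v.2.1.1 - v.2.2.2.1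

def kowEta (v : ℝ⁹) : ℝ := 2 * v.1.1 * v.1.2.1 + v.2.1.2.1 + v.2.2.1

theorem Kfun_eq_kowXi_sq_add_kowEta_sq : Kfun = fun v => kowXi v ^ 2 + kowEta v ^ 2 := rfl

theorem differentiable_kowXi : Differentiable ℝ kowXi := by
  unfold kowXi; fun_prop

theorem differentiable_kowEta : Differentiable ℝ kowEta := by
  unfold kowEta; fun_prop

theorem fderiv_kowXi_apply (v w : ℝ⁹) :
    fderiv ℝ kowXi v w = 2 * v.1.1 * w.1.1 - 2 * v.1.2.1 * w.1.2.1 + w.2.1.1 - w.2.2.2.1 := by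
  have hω₁ := (hasFDerivAt_id (𝕜 := ℝ) v).fst.fst
  have hω₂ := (hasFDerivAt_id (𝕜 := ℝ) v).fst.snd.fst
  have hα₁ := (hasFDerivAt_id (𝕜 := ℝ) v).snd.fst.fst
  have hβ₂ := (hasFDerivAt_id (𝕜 := ℝ) v).snd.snd.snd.fst
  have h : HasFDerivAt kowXi _ v := (((hω₁.pow 2).sub (hω₂.pow 2)).add hα₁).sub hβ₂
  rw [h.fderiv]
  simp

theorem fderiv_kowEta_apply (v w : ℝ⁹) :
    fderiv ℝ kowEta v w = 2 * (w.1.1 * v.1.2.1 + v.1.1 * w.1.2.1) + w.2.1.2.1 + w.2.2.1 := by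
  have hω₁ := (hasFDerivAt_id (𝕜 := ℝ) v).fst.fst
  have hω₂ := (hasFDerivAt_id (𝕜 := ℝ) v).fst.snd.fst
  have hα₂ := (hasFDerivAt_id (𝕜 := ℝ) v).snd.fst.snd.fst
  have hβ₁ := (hasFDerivAt_id (𝕜 := ℝ) v).snd.snd.fst
  have h : HasFDerivAt kowEta _ v := (((hω₁.const_mul 2).mul hω₂).add hα₂).add hβ₁
  rw [h.fderiv]
  simp only [id_eq, ContinuousLinearMap.comp_id, add_apply, smul_apply, ContinuousLinearMap.comp_apply,
    ContinuousLinearMap.coe_fst', ContinuousLinearMap.coe_snd', smul_eq_mul]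
  ring

theorem fderiv_kowXi_kowField (v : ℝ⁹) : fderiv ℝ kowXi v (kowField v) = v.1.2.2 * kowEta v := by
  rw [fderiv_kowXi_apply]
  simp only [kowField, cross3, kowEta]
  ring

theorem fderiv_kowEta_kowField (v : ℝ⁹) :
    fderiv ℝ kowEta v (kowField v) = -(v.1.2.2 * kowXi v) := by
  rw [fderiv_kowEta_apply]
  simp only [kowField, cross3, kowXi]
  ring

/-- `K` is a first integral of the Kowalevski two-field equations: at every point of ℝ⁹
the directional derivative of `K` along the vector field of the equations vanishes. -/
theorem K_first_integral :
    ∀ v : (ℝ × ℝ × ℝ) × (ℝ × ℝ × ℝ) × (ℝ × ℝ × ℝ),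
      fderiv ℝ Kfun v (kowField v) = 0 := by
  intro v
  rw [Kfun_eq_kowXi_sq_add_kowEta_sq]
  exact fderiv_sq_add_sq_apply_eq_zero v.1.2.2 (differentiable_kowXi v) (differentiable_kowEta v)
      (fderiv_kowXi_kowField v) (fderiv_kowEta_kowField v)
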